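/- arXiv:1401.3717 — 2 statements merged into one kernel-verified Lean document; each statement's English description precedes it below -/
import Mathlib

section
/- Let A, B, E, C, D, Θ, J be real matrices (Θ antisymmetric n×n, J antisymmetric m₀×m₀) with partitions C = [C₊; C₋], D = [D₊; D₋], E = [E₊ E₋], and set A_z := A + z^{−1}E₊C₊ + zE₋C₋, B_z := B + z^{−1}E₊D₊ + zE₋D₋. If N ≥ 5, then A_zΘ + Θ(A_z)* + B_z J (B_z)* = 0 holds for all z ∈ U_N if and only if the following three matrix equations hold: (i) AΘ + ΘAᵀ + BJBᵀ + E₊D₊JD₊ᵀE₊ᵀ + E₋D₋JD₋ᵀE₋ᵀ = 0; (ii) E₊C₊Θ + ΘC₋ᵀE₋ᵀ + BJD₋ᵀE₋ᵀ + E₊D₊JBᵀ = 0; (iii) E₊D₊JD₋ᵀE₋ᵀ = 0. -/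
/-!
On the unit circle `star z = z⁻¹`, so `(A_z)ᴴ = Aᵀ + z (E₊C₊)ᵀ + z⁻¹ (E₋C₋)ᵀ` and the left-hand side
`L_z` is a Laurent polynomial `∑_{|s| ≤ 2} z ^ s M_s` whose coefficients `M_0`, `M_{-1}`, `M_{-2}`
are the left-hand sides of (i), (ii), (iii); antisymmetry of `Θ` and `J` gives `M_s = -M_{-s}ᵀ`.
Hence (i)–(iii) make `L_z` vanish identically. Conversely, `z ^ 2 L_z` is a matrix polynomial of
degree at most `4` vanishing at the `N ≥ 5` distinct `N`-th roots of unity, so all its coefficients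
vanish by the invertibility of a Vandermonde matrix.
-/

open Complex Finset Matrix

noncomputable def rootOfUnity (N ℓ : ℕ) : ℂ :=
  Complex.exp (2 * Real.pi * Complex.I * ℓ / N)

/-- `A_z := A + z⁻¹E₊C₊ + zE₋C₋` (complexified). -/
noncomputable def Az {n mp mm : ℕ} (A : Matrix (Fin n) (Fin n) ℝ)
    (Ep : Matrix (Fin n) (Fin mp) ℝ) (Cp : Matrix (Fin mp) (Fin n) ℝ)
    (Em : Matrix (Fin n) (Fin mm) ℝ) (Cm : Matrix (Fin mm) (Fin n) ℝ) (z : ℂ) :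
    Matrix (Fin n) (Fin n) ℂ :=
  A.map Complex.ofReal + z⁻¹ • (Ep * Cp).map Complex.ofReal + z • (Em * Cm).map Complex.ofReal

/-- `B_z := B + z⁻¹E₊D₊ + zE₋D₋` (complexified). -/
noncomputable def Bz {n m₀ mp mm : ℕ} (B : Matrix (Fin n) (Fin m₀) ℝ)
    (Ep : Matrix (Fin n) (Fin mp) ℝ) (Dp : Matrix (Fin mp) (Fin m₀) ℝ)
    (Em : Matrix (Fin n) (Fin mm) ℝ) (Dm : Matrix (Fin mm) (Fin m₀) ℝ) (z : ℂ) :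
    Matrix (Fin n) (Fin m₀) ℂ :=
  B.map Complex.ofReal + z⁻¹ • (Ep * Dp).map Complex.ofReal + z • (Em * Dm).map Complex.ofReal

namespace Matrix

variable {α β γ : Type*}

theorem eq_zero_of_forall_sum_pow_smul_eq_zero {R : Type*} [CommRing R] [IsDomain R] {d : ℕ}
    {x : Fin d → R} (hx : Function.Injective x) {M : Fin d → Matrix α β R}
    (h : ∀ i, ∑ k : Fin d, x i ^ (k : ℕ) • M k = 0) (k : Fin d) : M k = 0 := by
  ext a b
  have hv : vandermonde x *ᵥ (fun k ↦ M k a b) = 0 := by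
    ext i
    simpa [mulVec, dotProduct, vandermonde_apply, Matrix.sum_apply] using
      congr_fun (congr_fun (h i) a) b
  exact congr_fun (eq_zero_of_mulVec_eq_zero (det_vandermonde_ne_zero_iff.2 hx) hv) k

theorem eq_zero_of_forall_laurent_eq_zero {K : Type*} [Field K] {x : Fin 5 → K}
    (hx : Function.Injective x) (hx₀ : ∀ i, x i ≠ 0) {Q₂ Q₁ M₀ P₁ P₂ : Matrix α β K}
    (h : ∀ i, (x i)⁻¹ ^ 2 • Q₂ + (x i)⁻¹ • Q₁ + M₀ + x i • P₁ + x i ^ 2 • P₂ = 0) :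
    Q₂ = 0 ∧ Q₁ = 0 ∧ M₀ = 0 ∧ P₁ = 0 ∧ P₂ = 0 := by
  have hpoly : ∀ i, ∑ k : Fin 5, x i ^ (k : ℕ) • ![Q₂, Q₁, M₀, P₁, P₂] k = 0 := by
    intro i
    calc ∑ k : Fin 5, x i ^ (k : ℕ) • ![Q₂, Q₁, M₀, P₁, P₂] k
        = x i ^ 2 • ((x i)⁻¹ ^ 2 • Q₂ + (x i)⁻¹ • Q₁ + M₀ + x i • P₁ + x i ^ 2 • P₂) := by
          simp only [Fin.sum_univ_five, Fin.coe_ofNat_eq_mod, Nat.reduceMod, cons_val]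
          match_scalars <;> field_simp [hx₀ i]
      _ = 0 := by rw [h i, smul_zero]
  have := eq_zero_of_forall_sum_pow_smul_eq_zero hx hpoly
  exact ⟨this 0, this 1, this 2, this 3, this 4⟩

theorem map_ofReal_eq_zero_iff {M : Matrix α β ℝ} : M.map ofReal = 0 ↔ M = 0 := by
  rw [← Matrix.map_zero ofReal ofReal_zero, (map_injective ofReal_injective).eq_iff]

theorem map_ofReal_mul [Fintype β] (M : Matrix α β ℝ) (M' : Matrix β γ ℝ) :
    (M * M').map ofReal = M.map ofReal * M'.map ofReal :=
  Matrix.map_mul (f := ofRealHom)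

theorem conjTranspose_map_ofReal (M : Matrix α β ℝ) : (M.map ofReal)ᴴ = (M.map ofReal)ᵀ := by
  ext; simp

theorem conjTranspose_laurent {X₀ Xm Xp : Matrix α β ℝ} {z : ℂ} (hz : ‖z‖ = 1) :
    (X₀.map ofReal + z⁻¹ • Xm.map ofReal + z • Xp.map ofReal)ᴴ
      = (X₀.map ofReal)ᵀ + z • (Xm.map ofReal)ᵀ + z⁻¹ • (Xp.map ofReal)ᵀ := by
  have hstar : star z = z⁻¹ := (inv_eq_conj hz).symm
  simp [conjTranspose_map_ofReal, hstar]

end Matrix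

section

variable {n m₀ mp mm : ℕ} (A Θ : Matrix (Fin n) (Fin n) ℝ) (B : Matrix (Fin n) (Fin m₀) ℝ)
  (J : Matrix (Fin m₀) (Fin m₀) ℝ) (Ep : Matrix (Fin n) (Fin mp) ℝ) (Cp : Matrix (Fin mp) (Fin n) ℝ)
  (Dp : Matrix (Fin mp) (Fin m₀) ℝ) (Em : Matrix (Fin n) (Fin mm) ℝ)
  (Cm : Matrix (Fin mm) (Fin n) ℝ) (Dm : Matrix (Fin mm) (Fin m₀) ℝ)

noncomputable def ccrLhs (z : ℂ) : Matrix (Fin n) (Fin n) ℂ :=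
  Az A Ep Cp Em Cm z * Θ.map ofReal + Θ.map ofReal * (Az A Ep Cp Em Cm z)ᴴ
    + Bz B Ep Dp Em Dm z * J.map ofReal * (Bz B Ep Dp Em Dm z)ᴴ

theorem ccrLhs_eq_laurent {z : ℂ} (hz : ‖z‖ = 1) :
    ccrLhs A Θ B J Ep Cp Dp Em Cm Dm z
      = z⁻¹ ^ 2 • (Ep * Dp * J * Dmᵀ * Emᵀ).map ofReal
        + z⁻¹ • (Ep * Cp * Θ + Θ * Cmᵀ * Emᵀ + B * J * Dmᵀ * Emᵀ + Ep * Dp * J * Bᵀ).map ofReal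
        + (A * Θ + Θ * Aᵀ + B * J * Bᵀ + Ep * Dp * J * Dpᵀ * Epᵀ + Em * Dm * J * Dmᵀ * Emᵀ).map ofReal
        + z • (Em * Cm * Θ + Θ * Cpᵀ * Epᵀ + B * J * Dpᵀ * Epᵀ + Em * Dm * J * Bᵀ).map ofReal
        + z ^ 2 • (Em * Dm * J * Dpᵀ * Epᵀ).map ofReal := by
  have hz₀ : z ≠ 0 := norm_ne_zero_iff.1 (by simp [hz])
  rw [ccrLhs, Az, Bz, conjTranspose_laurent hz, conjTranspose_laurent hz]
  simp only [map_ofReal_mul, Matrix.map_add ofReal ofReal_add, transpose_map, transpose_mul,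
    Matrix.add_mul, Matrix.mul_add, Matrix.smul_mul, Matrix.mul_smul, Matrix.mul_assoc, smul_add]
  match_scalars <;> field_simp

variable {Θ J}

theorem ccrLhs_coeff_one_eq_neg_transpose (hΘ : Θᵀ = -Θ) (hJ : Jᵀ = -J) :
    Em * Cm * Θ + Θ * Cpᵀ * Epᵀ + B * J * Dpᵀ * Epᵀ + Em * Dm * J * Bᵀ
      = -(Ep * Cp * Θ + Θ * Cmᵀ * Emᵀ + B * J * Dmᵀ * Emᵀ + Ep * Dp * J * Bᵀ)ᵀ := by
  simp only [transpose_add, transpose_mul, transpose_transpose, hΘ, hJ, Matrix.neg_mul,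
    Matrix.mul_neg, neg_add_rev, neg_neg, Matrix.mul_assoc]
  abel

theorem ccrLhs_coeff_two_eq_neg_transpose (hJ : Jᵀ = -J) :
    Em * Dm * J * Dpᵀ * Epᵀ = -(Ep * Dp * J * Dmᵀ * Emᵀ)ᵀ := by
  simp only [transpose_mul, transpose_transpose, hJ, Matrix.neg_mul, Matrix.mul_neg, neg_neg,
    Matrix.mul_assoc]

end

theorem rootOfUnity_eq_pow (N ℓ : ℕ) : rootOfUnity N ℓ = exp (2 * Real.pi * I / N) ^ ℓ := by
  rw [rootOfUnity, ← Complex.exp_nat_mul]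
  congr 1
  ring

/-- For `N ≥ 5`, the CCR-preservation identity
`A_zΘ + Θ(A_z)* + B_zJ(B_z)* = 0` holds at all `N`-th roots of unity iff three matrix
algebraic equations hold for the parameters of the building block. -/
theorem stmt_7 {n m₀ mp mm : ℕ} (N : ℕ) (hN : 5 ≤ N)
    (A Θ : Matrix (Fin n) (Fin n) ℝ) (hΘ : Θᵀ = -Θ)
    (B : Matrix (Fin n) (Fin m₀) ℝ)
    (J : Matrix (Fin m₀) (Fin m₀) ℝ) (hJ : Jᵀ = -J)
    (Ep : Matrix (Fin n) (Fin mp) ℝ) (Cp : Matrix (Fin mp) (Fin n) ℝ)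
    (Dp : Matrix (Fin mp) (Fin m₀) ℝ)
    (Em : Matrix (Fin n) (Fin mm) ℝ) (Cm : Matrix (Fin mm) (Fin n) ℝ)
    (Dm : Matrix (Fin mm) (Fin m₀) ℝ) :
    (∀ ℓ ∈ Finset.range N,
        Az A Ep Cp Em Cm (rootOfUnity N ℓ) * Θ.map Complex.ofReal
          + Θ.map Complex.ofReal * (Az A Ep Cp Em Cm (rootOfUnity N ℓ))ᴴ
          + Bz B Ep Dp Em Dm (rootOfUnity N ℓ) * J.map Complex.ofReal
              * (Bz B Ep Dp Em Dm (rootOfUnity N ℓ))ᴴ = 0) ↔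
      (A * Θ + Θ * Aᵀ + B * J * Bᵀ + Ep * Dp * J * Dpᵀ * Epᵀ + Em * Dm * J * Dmᵀ * Emᵀ = 0 ∧
       Ep * Cp * Θ + Θ * Cmᵀ * Emᵀ + B * J * Dmᵀ * Emᵀ + Ep * Dp * J * Bᵀ = 0 ∧
       Ep * Dp * J * Dmᵀ * Emᵀ = 0) := by
  have hN₀ : N ≠ 0 := by omega
  have hζ := isPrimitiveRoot_exp N hN₀
  have hnorm (ℓ : ℕ) : ‖rootOfUnity N ℓ‖ = 1 := by
    rw [rootOfUnity_eq_pow, norm_pow, hζ.norm'_eq_one hN₀, one_pow]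
  change (∀ ℓ ∈ range N, ccrLhs A Θ B J Ep Cp Dp Em Cm Dm (rootOfUnity N ℓ) = 0) ↔ _
  simp only [ccrLhs_eq_laurent, hnorm]
  constructor
  · intro h
    have hinj : Function.Injective fun i : Fin 5 ↦ rootOfUnity N i := fun i j hij ↦
      Fin.ext (hζ.pow_inj (by omega) (by omega) (by simpa only [rootOfUnity_eq_pow] using hij))
    obtain ⟨h₂, h₁, h₀, -, -⟩ := eq_zero_of_forall_laurent_eq_zero hinj
      (fun i ↦ norm_ne_zero_iff.1 (by simp [hnorm])) (fun i ↦ h i (mem_range.2 (by omega)))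
    exact ⟨map_ofReal_eq_zero_iff.1 h₀, map_ofReal_eq_zero_iff.1 h₁, map_ofReal_eq_zero_iff.1 h₂⟩
  · rintro ⟨h₀, h₁, h₂⟩ ℓ -
    rw [ccrLhs_coeff_one_eq_neg_transpose B Ep Cp Dp Em Cm Dm hΘ hJ,
      ccrLhs_coeff_two_eq_neg_transpose Ep Dp Em Dm hJ, h₀, h₁, h₂]
    simp
end

section
/- Let (σ_k)_{k∈ℤ} be an absolutely summable sequence of real n×n matrices with σ_{−k} = σ_kᵀ, with Fourier transform Σ_z. Let z ↦ S_z be a continuous ℂ^{n×n}-valued function on the unit circle, and set E_N := ∑_{z∈U_N} Tr(Σ̂_N(z) S_z) with Σ̂_N(z) := ∑_{|ℓ|<N}(1 − |ℓ|/N) z^{−ℓ}σ_ℓ. Then lim_{N→∞} E_N / N = (1/2πi)·∮_U Tr(Σ_z S_z) dz/z. -/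
open Complex Matrix Finset Filter

attribute [local instance]
  Matrix.frobeniusNormedAddCommGroup Matrix.frobeniusNormedSpace

/-- The Fourier transform `Σ_z := ∑_{k∈ℤ} z^{-k} σ_k`. -/
noncomputable def specDens {n : ℕ} (σ : ℤ → Matrix (Fin n) (Fin n) ℝ) (z : ℂ) :
    Matrix (Fin n) (Fin n) ℂ :=
  ∑' k : ℤ, z ^ (-k) • (σ k).map Complex.ofReal

/-- The Cesàro-truncated transform `Σ̂_N(z) := ∑_{|ℓ|<N} (1 − |ℓ|/N) z^{-ℓ} σ_ℓ`. -/
noncomputable def specDensTrunc {n : ℕ} (N : ℕ) (σ : ℤ → Matrix (Fin n) (Fin n) ℝ) (z : ℂ) :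
    Matrix (Fin n) (Fin n) ℂ :=
  ∑ ℓ ∈ Finset.Icc (1 - (N : ℤ)) ((N : ℤ) - 1),
    (((1 - |ℓ| / (N : ℝ)) : ℝ) : ℂ) • z ^ (-ℓ) • (σ ℓ).map Complex.ofReal

/-! The error `E_N/N − (1/N)∑_{z∈U_N} Tr(Σ_z S_z)` is an average of `Tr((Σ̂_N(z) − Σ_z) S_z)`,
so Cauchy–Schwarz for the Frobenius inner product bounds it by
`max_{|z|=1} ‖S_z‖ · ∑_k min(|k|/N, 1) ‖σ_k‖`, and the last sum tends to `0` by dominated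
convergence. What remains, `(1/N)∑_{z∈U_N} Tr(Σ_z S_z)`, is a Riemann sum of the continuous
`2π`-periodic function `φ ↦ Tr(Σ_{e^{iφ}} S_{e^{iφ}})`. -/

section RiemannSum

variable {E : Type*} [NormedAddCommGroup E] [NormedSpace ℝ E] [CompleteSpace E] {f : ℝ → E}

theorem norm_smul_sub_intervalIntegral_le {c d ε : ℝ} (hcd : c ≤ d)
    (hf : IntervalIntegrable f MeasureTheory.volume c d)
    (hε : ∀ y ∈ Set.Ioc c d, ‖f c - f y‖ ≤ ε) :
    ‖(d - c) • f c - ∫ y in c..d, f y‖ ≤ ε * (d - c) := by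
  rw [← intervalIntegral.integral_const,
    ← intervalIntegral.integral_sub intervalIntegrable_const hf]
  have := intervalIntegral.norm_integral_le_of_norm_le_const (by rwa [Set.uIoc_of_le hcd])
  rwa [abs_of_nonneg (sub_nonneg.mpr hcd)] at this

theorem norm_riemannSum_sub_intervalIntegral_le {a b ε : ℝ} {N : ℕ} (hab : a ≤ b) (hN : N ≠ 0)
    (hf : IntervalIntegrable f MeasureTheory.volume a b)
    (hε : ∀ x ∈ Set.Icc a b, ∀ y ∈ Set.Icc a b, dist x y ≤ (b - a) / N → dist (f x) (f y) ≤ ε) :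
    ‖((b - a) / N) • ∑ j ∈ range N, f (a + (b - a) * j / N) - ∫ x in a..b, f x‖
      ≤ (b - a) * ε := by
  set x : ℕ → ℝ := fun j => a + (b - a) * j / N
  have hNpos : (0 : ℝ) < N := by positivity
  have hstep : ∀ j, x (j + 1) - x j = (b - a) / N := fun j => by
    simp only [x]; push_cast; ring
  have hmono : ∀ j, x j ≤ x (j + 1) := fun j => by
    linarith [hstep j, div_nonneg (sub_nonneg.mpr hab) hNpos.le]
  have hmem : ∀ j ≤ N, x j ∈ Set.Icc a b := fun j hj => by
    have h1 : (j : ℝ) / N ≤ 1 := div_le_one_of_le₀ (by exact_mod_cast hj) hNpos.le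
    have h0 : 0 ≤ (j : ℝ) / N := by positivity
    simp only [x, Set.mem_Icc, mul_div_assoc]
    constructor <;> nlinarith
  have hint : ∀ j < N, IntervalIntegrable f MeasureTheory.volume (x j) (x (j + 1)) :=
    fun j hj => hf.mono_set (Set.uIcc_subset_uIcc (Set.Icc_subset_uIcc (hmem j hj.le))
      (Set.Icc_subset_uIcc (hmem (j + 1) hj)))
  have hsplit : ∫ y in a..b, f y = ∑ j ∈ range N, ∫ y in x j..x (j + 1), f y := by
    rw [intervalIntegral.sum_integral_adjacent_intervals hint]
    simp [x, hNpos.ne']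
  have hterm : ∀ j ∈ range N,
      ‖((b - a) / N) • f (x j) - ∫ y in x j..x (j + 1), f y‖ ≤ ε * ((b - a) / N) := by
    intro j hj
    rw [mem_range] at hj
    rw [← hstep j]
    refine norm_smul_sub_intervalIntegral_le (hmono j) ?_ fun y hy => ?_
    · exact hint j hj
    · rw [← dist_eq_norm]
      refine hε _ (hmem j hj.le) _ (Set.Icc_subset_Icc (hmem j hj.le).1 (hmem (j + 1) hj).2
        (Set.Ioc_subset_Icc_self hy)) ?_
      rw [Real.dist_eq, abs_of_nonpos (by linarith [hy.1]), ← hstep j]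
      linarith [hy.2]
  calc _ = ‖∑ j ∈ range N, (((b - a) / N) • f (x j) - ∫ y in x j..x (j + 1), f y)‖ := by
        rw [hsplit, sum_sub_distrib, smul_sum]
    _ ≤ ∑ _j ∈ range N, ε * ((b - a) / N) := norm_sum_le_of_le _ hterm
    _ = (b - a) * ε := by rw [sum_const, card_range, nsmul_eq_mul]; field_simp

theorem tendsto_riemannSum_intervalIntegral {a b : ℝ} (hab : a ≤ b)
    (hf : ContinuousOn f (Set.Icc a b)) :
    Tendsto (fun N : ℕ => ((b - a) / N) • ∑ j ∈ range N, f (a + (b - a) * j / N)) atTop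
      (nhds (∫ x in a..b, f x)) := by
  rw [Metric.tendsto_nhds]
  intro ε hε
  have hε' : 0 < ε / (b - a + 1) := div_pos hε (by linarith)
  obtain ⟨δ, hδ, hfδ⟩ := Metric.uniformContinuousOn_iff_le.mp
    (isCompact_Icc.uniformContinuousOn_of_continuous hf) _ hε'
  have hmesh : ∀ᶠ N : ℕ in atTop, (b - a) / N ≤ δ :=
    (tendsto_const_div_atTop_nhds_zero_nat (b - a)).eventually (Iic_mem_nhds hδ)
  filter_upwards [hmesh, eventually_ne_atTop 0] with N hNδ hN
  rw [dist_eq_norm]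
  refine (norm_riemannSum_sub_intervalIntegral_le hab hN (hf.intervalIntegrable_of_Icc hab)
    fun x hx y hy hxy => hfδ x hx y hy (hxy.trans hNδ)).trans_lt ?_
  rw [mul_div_assoc', div_lt_iff₀ (by linarith)]
  nlinarith

theorem Function.Periodic.tendsto_average_intervalIntegral {T : ℝ} (hf : Continuous f)
    (hper : Function.Periodic f T) (hT : 0 < T) (a : ℝ) :
    Tendsto (fun N : ℕ => (N : ℝ)⁻¹ • ∑ j ∈ range N, f (T * j / N)) atTop
      (nhds (T⁻¹ • ∫ x in a..a + T, f x)) := by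
  have h := (tendsto_riemannSum_intervalIntegral hT.le hf.continuousOn).const_smul T⁻¹
  rw [sub_zero] at h
  rw [hper.intervalIntegral_add_eq a 0, zero_add]
  refine h.congr fun N => ?_
  simp only [zero_add, smul_smul]
  congr 1
  field_simp

end RiemannSum

theorem Matrix.frobenius_norm_eq_sqrt {m l α : Type*} [Fintype m] [Fintype l]
    [NormedAddCommGroup α] (M : Matrix m l α) : ‖M‖ = √(∑ i, ∑ j, ‖M i j‖ ^ 2) := by
  rw [frobenius_norm_def, Real.sqrt_eq_rpow]
  simp only [Real.rpow_two]

theorem Matrix.norm_trace_mul_le {m l α : Type*} [Fintype m] [Fintype l] [NormedRing α]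
    (A : Matrix m l α) (B : Matrix l m α) : ‖(A * B).trace‖ ≤ ‖A‖ * ‖B‖ := by
  calc ‖(A * B).trace‖ ≤ ∑ i, ∑ j, ‖A i j‖ * ‖Bᵀ i j‖ := by
        refine (norm_sum_le _ _).trans (sum_le_sum fun i _ => ?_)
        exact (norm_sum_le _ _).trans (sum_le_sum fun j _ => norm_mul_le _ _)
    _ ≤ ‖A‖ * ‖Bᵀ‖ := by
        simp only [frobenius_norm_eq_sqrt, ← Fintype.sum_prod_type']
        exact Real.sum_mul_le_sqrt_mul_sqrt _ _ _
    _ = ‖A‖ * ‖B‖ := by rw [frobenius_norm_transpose]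

/-- The defect `1 - w_N(k)` of the Cesàro weight `w_N(k) = (1 - |k|/N)₊` used in `specDensTrunc`. -/
noncomputable def cesaroDefect (N : ℕ) (k : ℤ) : ℝ := if |k| < (N : ℤ) then |k| / N else 1

theorem cesaroDefect_nonneg (N : ℕ) (k : ℤ) : 0 ≤ cesaroDefect N k := by
  unfold cesaroDefect; split <;> positivity

theorem cesaroDefect_le_one (N : ℕ) (k : ℤ) : cesaroDefect N k ≤ 1 := by
  unfold cesaroDefect
  split_ifs with hk
  · exact div_le_one_of_le₀ (by exact_mod_cast hk.le) (Nat.cast_nonneg N)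
  · exact le_rfl

theorem tendsto_cesaroDefect (k : ℤ) : Tendsto (fun N : ℕ => cesaroDefect N k) atTop (nhds 0) := by
  refine (tendsto_const_div_atTop_nhds_zero_nat ((|k| : ℤ) : ℝ)).congr' ?_
  filter_upwards [eventually_gt_atTop k.natAbs] with N hN
  rw [cesaroDefect, if_pos (by rw [Int.abs_eq_natAbs]; exact_mod_cast hN)]

theorem tendsto_tsum_cesaroDefect_mul {u : ℤ → ℝ} (hu : Summable u) :
    Tendsto (fun N : ℕ => ∑' k, cesaroDefect N k * u k) atTop (nhds 0) := by
  simpa only [tsum_zero] using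
    tendsto_tsum_of_dominated_convergence (g := fun _ => (0 : ℝ)) hu.abs
      (fun k => by simpa using (tendsto_cesaroDefect k).mul_const (u k))
      (Eventually.of_forall fun N k => by
        rw [norm_mul, Real.norm_of_nonneg (cesaroDefect_nonneg N k), Real.norm_eq_abs]
        exact mul_le_of_le_one_left (abs_nonneg _) (cesaroDefect_le_one N k))

section SpectralDensity

variable {n : ℕ} (σ : ℤ → Matrix (Fin n) (Fin n) ℝ)

theorem norm_zpow_neg_smul_map_ofReal {z : ℂ} (hz : ‖z‖ = 1) (k : ℤ) :
    ‖z ^ (-k) • (σ k).map Complex.ofReal‖ = ‖σ k‖ := by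
  rw [norm_smul, norm_zpow, hz, _root_.one_zpow, one_mul,
    frobenius_norm_map_eq _ _ fun a => Complex.norm_real a]

theorem specDensTrunc_eq_tsum (N : ℕ) (z : ℂ) :
    specDensTrunc N σ z
      = ∑' k : ℤ, ((1 - cesaroDefect N k : ℝ) : ℂ) • z ^ (-k) • (σ k).map Complex.ofReal := by
  rw [specDensTrunc, tsum_eq_sum (s := Finset.Icc (1 - (N : ℤ)) ((N : ℤ) - 1))]
  · refine sum_congr rfl fun k hk => ?_
    rw [cesaroDefect, if_pos (by rw [Finset.mem_Icc] at hk; rw [abs_lt]; omega)]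
  · intro k hk
    rw [cesaroDefect, if_neg (by rw [Finset.mem_Icc] at hk; rw [abs_lt]; omega)]
    simp

variable {σ}

theorem specDens_sub_specDensTrunc (hsum : Summable fun k => ‖σ k‖) (N : ℕ) {z : ℂ}
    (hz : ‖z‖ = 1) :
    specDens σ z - specDensTrunc N σ z
      = ∑' k : ℤ, (cesaroDefect N k : ℂ) • z ^ (-k) • (σ k).map Complex.ofReal := by
  have hterm : Summable fun k : ℤ => z ^ (-k) • (σ k).map Complex.ofReal :=
    hsum.of_norm_bounded fun k => (norm_zpow_neg_smul_map_ofReal σ hz k).le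
  have hweighted : Summable fun k : ℤ =>
      ((1 - cesaroDefect N k : ℝ) : ℂ) • z ^ (-k) • (σ k).map Complex.ofReal := by
    refine hsum.of_norm_bounded fun k => ?_
    rw [norm_smul, norm_zpow_neg_smul_map_ofReal σ hz, Complex.norm_real, Real.norm_of_nonneg
      (sub_nonneg.mpr (cesaroDefect_le_one N k))]
    exact mul_le_of_le_one_left (norm_nonneg _) (by linarith [cesaroDefect_nonneg N k])
  rw [specDens, specDensTrunc_eq_tsum, ← hterm.tsum_sub hweighted]
  refine tsum_congr fun k => ?_
  rw [Complex.ofReal_sub, Complex.ofReal_one, sub_smul, one_smul, sub_sub_cancel]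

theorem norm_specDens_sub_specDensTrunc_le (hsum : Summable fun k => ‖σ k‖) (N : ℕ) {z : ℂ}
    (hz : ‖z‖ = 1) :
    ‖specDens σ z - specDensTrunc N σ z‖ ≤ ∑' k, cesaroDefect N k * ‖σ k‖ := by
  have hnorm : ∀ k : ℤ, ‖(cesaroDefect N k : ℂ) • z ^ (-k) • (σ k).map Complex.ofReal‖
      = cesaroDefect N k * ‖σ k‖ := fun k => by
    rw [norm_smul, norm_zpow_neg_smul_map_ofReal σ hz, Complex.norm_real,
      Real.norm_of_nonneg (cesaroDefect_nonneg N k)]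
  have hsumm : Summable fun k => cesaroDefect N k * ‖σ k‖ :=
    hsum.of_nonneg_of_le (fun k => mul_nonneg (cesaroDefect_nonneg N k) (norm_nonneg _))
      fun k => mul_le_of_le_one_left (norm_nonneg _) (cesaroDefect_le_one N k)
  rw [specDens_sub_specDensTrunc hsum N hz]
  exact (norm_tsum_le_tsum_norm (by simpa only [hnorm] using hsumm)).trans_eq (tsum_congr hnorm)

theorem continuousOn_specDens (hsum : Summable fun k => ‖σ k‖) :
    ContinuousOn (specDens σ) {z : ℂ | ‖z‖ = 1} := by
  refine continuousOn_tsum (fun k => ?_) hsum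
    fun k z hz => (norm_zpow_neg_smul_map_ofReal σ hz k).le
  refine (continuousOn_id.zpow₀ (-k) fun z hz => Or.inl ?_).smul continuousOn_const
  rintro rfl
  simp at hz

end SpectralDensity

theorem norm_average_trace_mul_sub_le {m l : Type*} [Fintype m] [Fintype l] (N : ℕ)
    {A B : ℕ → Matrix m l ℂ} {S : ℕ → Matrix l m ℂ} {ε C : ℝ}
    (hAB : ∀ ℓ, ‖A ℓ - B ℓ‖ ≤ ε) (hS : ∀ ℓ, ‖S ℓ‖ ≤ C) :
    ‖(1 / (N : ℂ)) * ∑ ℓ ∈ range N, (A ℓ * S ℓ).trace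
      - (1 / (N : ℂ)) * ∑ ℓ ∈ range N, (B ℓ * S ℓ).trace‖ ≤ ε * C := by
  have hεC : 0 ≤ ε * C :=
    mul_nonneg ((norm_nonneg _).trans (hAB 0)) ((norm_nonneg _).trans (hS 0))
  have hterm : ∀ ℓ ∈ range N, ‖(A ℓ * S ℓ).trace - (B ℓ * S ℓ).trace‖ ≤ ε * C := fun ℓ _ => by
    rw [← trace_sub, ← Matrix.sub_mul]
    exact (norm_trace_mul_le _ _).trans
      (mul_le_mul (hAB ℓ) (hS ℓ) (norm_nonneg _) ((norm_nonneg _).trans (hAB ℓ)))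
  rw [← mul_sub, ← sum_sub_distrib, norm_mul]
  refine (mul_le_mul_of_nonneg_left (norm_sum_le_of_le _ hterm) (norm_nonneg _)).trans ?_
  rcases N.eq_zero_or_pos with rfl | hN
  · simpa using hεC
  · rw [sum_const, card_range, nsmul_eq_mul, norm_div, norm_one, _root_.norm_natCast, ← mul_assoc,
      one_div_mul_cancel (by positivity), one_mul]

theorem rootOfUnity_eq_exp (N ℓ : ℕ) :
    rootOfUnity N ℓ = Complex.exp (((2 * Real.pi * ℓ / N : ℝ) : ℂ) * Complex.I) := by
  rw [rootOfUnity]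
  push_cast
  ring_nf

theorem norm_rootOfUnity (N ℓ : ℕ) : ‖rootOfUnity N ℓ‖ = 1 := by
  rw [rootOfUnity_eq_exp]
  exact Complex.norm_exp_ofReal_mul_I _

theorem tendsto_average_rootOfUnity {E : Type*} [NormedAddCommGroup E] [NormedSpace ℂ E]
    [CompleteSpace E] {g : ℂ → E} (hg : ContinuousOn g {z : ℂ | ‖z‖ = 1}) :
    Tendsto (fun N : ℕ => (1 / (N : ℂ)) • ∑ ℓ ∈ range N, g (rootOfUnity N ℓ)) atTop
      (nhds ((1 / (2 * (Real.pi : ℂ))) •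
        ∫ φ in (-Real.pi)..Real.pi, g (Complex.exp (φ * Complex.I)))) := by
  have hf : Continuous fun φ : ℝ => g (Complex.exp (φ * Complex.I)) :=
    hg.comp_continuous (by fun_prop) Complex.norm_exp_ofReal_mul_I
  have hper : Function.Periodic (fun φ : ℝ => g (Complex.exp (φ * Complex.I))) (2 * Real.pi) :=
    fun φ => by
      simp only [Complex.ofReal_add, add_mul, Complex.exp_add, Complex.ofReal_mul,
        Complex.ofReal_ofNat, Complex.exp_two_pi_mul_I, mul_one]
  have h := hper.tendsto_average_intervalIntegral hf Real.two_pi_pos (-Real.pi)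
  rw [show -Real.pi + 2 * Real.pi = Real.pi by ring] at h
  convert h using 2 with N
  · simp [← Complex.coe_smul, rootOfUnity_eq_exp]
  · simp [← Complex.coe_smul]

theorem stmt_14_general {n : ℕ} (σ : ℤ → Matrix (Fin n) (Fin n) ℝ)
    (hsum : Summable fun k : ℤ => ‖σ k‖)
    (S : ℂ → Matrix (Fin n) (Fin n) ℂ)
    (hS : ContinuousOn S {z : ℂ | ‖z‖ = 1}) :
    Tendsto
      (fun N : ℕ => (1 / (N : ℂ)) *
        ∑ ℓ ∈ Finset.range N,
          (specDensTrunc N σ (rootOfUnity N ℓ) * S (rootOfUnity N ℓ)).trace)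
      atTop
      (nhds ((1 / (2 * (Real.pi : ℂ))) *
        ∫ φ in (-Real.pi)..Real.pi,
          (specDens σ (Complex.exp (φ * Complex.I)) *
            S (Complex.exp (φ * Complex.I))).trace)) := by
  have htrace : ContinuousOn (fun z => (specDens σ z * S z).trace) {z : ℂ | ‖z‖ = 1} := by
    rw [continuousOn_iff_continuous_domRestrict] at hS ⊢
    exact ((continuousOn_specDens hsum).domRestrict.matrix_mul hS).matrix_trace
  have hcpt : IsCompact {z : ℂ | ‖z‖ = 1} := by
    convert isCompact_sphere (0 : ℂ) 1 using 1
    ext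
    simp
  obtain ⟨C, hC⟩ := hcpt.exists_bound_of_continuousOn hS
  have herr := squeeze_zero_norm (fun N => norm_average_trace_mul_sub_le N
    (fun ℓ => (norm_sub_rev _ _).trans_le
      (norm_specDens_sub_specDensTrunc_le hsum N (norm_rootOfUnity N ℓ)))
    (fun ℓ => hC _ (norm_rootOfUnity N ℓ)))
    (by simpa using (tendsto_tsum_cesaroDefect_mul hsum).mul_const C)
  simpa using herr.add (tendsto_average_rootOfUnity htrace)

/-- For an absolutely summable symmetric weighting sequence and a continuous `z ↦ S_z` on the
unit circle, `E_N/N → (1/2πi)∮ Tr(Σ_z S_z) dz/z`, where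
`E_N = ∑_{z∈U_N} Tr(Σ̂_N(z) S_z)`. -/
theorem stmt_14 {n : ℕ} (σ : ℤ → Matrix (Fin n) (Fin n) ℝ)
    (hsum : Summable fun k : ℤ => ‖σ k‖)
    (hsymm : ∀ k : ℤ, σ (-k) = (σ k)ᵀ)
    (S : ℂ → Matrix (Fin n) (Fin n) ℂ)
    (hS : ContinuousOn S {z : ℂ | ‖z‖ = 1}) :
    Tendsto
      (fun N : ℕ => (1 / (N : ℂ)) *
        ∑ ℓ ∈ Finset.range N,
          (specDensTrunc N σ (rootOfUnity N ℓ) * S (rootOfUnity N ℓ)).trace)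
      atTop
      (nhds ((1 / (2 * (Real.pi : ℂ))) *
        ∫ φ in (-Real.pi)..Real.pi,
          (specDens σ (Complex.exp (φ * Complex.I)) *
            S (Complex.exp (φ * Complex.I))).trace)) :=
  stmt_14_general σ hsum S hS
end
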